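/- arXiv:1006.2044 — 11 statements merged into one kernel-verified Lean document; each statement's English description precedes it below -/
import Mathlib

section
/- Define h(1) = 1 and h(β) = 3β + (2β+1)·h(β−1) for β ≥ 2. If D is a finite multipartite digraph containing no cyclic triangle with transversal independence number β(D) = β ≥ 1, then k(D) ≤ h(β). -/
/-!
Induct on `β`, for the subdigraphs induced on vertex sets `P`. Among the independent
transversals of `P` of maximum size `β`, let `J ≺ I` when every vertex of `J` beats all of `I`
and is beaten by no vertex of `P` lying in a class of `I`. Along a chain `J₁ ≺ J₂ ≺ ⋯ ≺ Jₖ` no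
vertex of `Jₖ` beats a vertex of `J₁`: otherwise it could be added to `J₂` (an arc back into
`J₂` would close a cyclic triangle). Hence `≺` is acyclic and some `I` has nothing below it.
A vertex of `P` outside the classes of `I` and not beaten from them either beats all of `I`,
and then lies in the set `Z` of vertices of `P` that beat `I` and are not beaten from its
classes, or is independent from some `u ∈ I`, and then lies in the set `Xᵤ` of such vertices.
Both `Z` (by minimality of `I`) and each `Xᵤ` (since `u` extends its transversals) have
transversal independence number `< β`, so by induction the classes of `I`, with those
dominating `Z` and the `Xᵤ`, number at most `β + (β + 1) h(β - 1) ≤ h(β)`.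
-/

/-- `hFun 1 = 1` and `hFun β = 3β + (2β+1)·hFun (β-1)` for `β ≥ 2`. -/
def hFun : ℕ → ℕ
  | 0 => 0
  | 1 => 1
  | (n + 2) => 3 * (n + 2) + (2 * (n + 2) + 1) * hFun (n + 1)

open Finset Relation

theorem add_mul_hFun_le_hFun_succ (n : ℕ) : n + 1 + (n + 2) * hFun n ≤ hFun (n + 1) := by
  rcases n with _ | m
  · simp [hFun]
  · simp only [hFun]
    nlinarith

section

variable {V ι : Type*} (arc : V → V → Prop) (part : V → ι)

def IsIndepPair (u v : V) : Prop :=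
  part u ≠ part v ∧ ¬ arc u v ∧ ¬ arc v u

def IsIndepTransversal (P : Set V) (s : Finset V) : Prop :=
  ↑s ⊆ P ∧ (s : Set V).Pairwise (IsIndepPair arc part)

def TransversalIndepLE (P : Set V) (β : ℕ) : Prop :=
  ∀ s, IsIndepTransversal arc part P s → s.card ≤ β

def ClassesDominate (P : Set V) (S : Finset ι) : Prop :=
  ∀ v ∈ P, part v ∉ S → ∃ w ∈ P, part w ∈ S ∧ arc w v

def strongDominators (P : Set V) (I : Finset V) : Set V :=
  {w ∈ P | (∀ v ∈ I, arc w v) ∧ ∀ z ∈ P, part z ∈ part '' I → ¬ arc z w}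

/-- The relation `J ≺ I` of the proof sketch, on independent transversals of size `m`. -/
def TransversalBelow (P : Set V) (m : ℕ) (J I : Finset V) : Prop :=
  IsIndepTransversal arc part P J ∧ J.card = m ∧ IsIndepTransversal arc part P I ∧ I.card = m ∧
    ↑J ⊆ strongDominators arc part P I

variable {arc part} {P Q : Set V} {s t : Finset V} {x : V} {m n : ℕ}

theorem IsIndepPair.symm {u v : V} (h : IsIndepPair arc part u v) : IsIndepPair arc part v u :=
  ⟨h.1.symm, h.2.2, h.2.1⟩

theorem IsIndepTransversal.mono (h : IsIndepTransversal arc part P s) (hts : t ⊆ s) :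
    IsIndepTransversal arc part P t :=
  ⟨(coe_subset.2 hts).trans h.1, h.2.mono (coe_subset.2 hts)⟩

theorem IsIndepTransversal.mono_set (h : IsIndepTransversal arc part P s) (hPQ : P ⊆ Q) :
    IsIndepTransversal arc part Q s :=
  ⟨h.1.trans hPQ, h.2⟩

theorem IsIndepTransversal.insert [DecidableEq V] (hs : IsIndepTransversal arc part P s)
    (hx : x ∈ P) (hxs : ∀ y ∈ s, IsIndepPair arc part x y) :
    IsIndepTransversal arc part P (insert x s) := by
  rw [IsIndepTransversal, coe_insert]
  exact ⟨Set.insert_subset hx hs.1, hs.2.insert fun y hy _ => ⟨hxs y hy, (hxs y hy).symm⟩⟩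

theorem TransversalIndepLE.card_lt (hP : TransversalIndepLE arc part P m)
    (hs : IsIndepTransversal arc part P s) (hx : x ∈ P)
    (hxs : ∀ y ∈ s, IsIndepPair arc part x y) : s.card < m := by
  classical
  have hxs' : x ∉ s := fun h => (hxs x h).1 rfl
  simpa [card_insert_of_notMem hxs'] using hP _ (hs.insert hx hxs)

theorem TransversalIndepLE.of_forall_card_ne
    (h : ∀ s, IsIndepTransversal arc part P s → s.card ≠ n + 1) :
    TransversalIndepLE arc part P n := by
  intro s hs
  by_contra! hlt
  obtain ⟨t, hts, htc⟩ := exists_subset_card_eq (show n + 1 ≤ s.card from hlt)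
  exact h t (hs.mono hts) htc

theorem not_arc_of_reflTransGen_transversalBelow (hasym : ∀ u v, arc u v → ¬ arc v u)
    (htri : ¬ ∃ a b c, arc a b ∧ arc b c ∧ arc c a) (hP : TransversalIndepLE arc part P m)
    {a c : Finset V} (hac : ReflTransGen (TransversalBelow arc part P m) a c)
    (hc : IsIndepTransversal arc part P c) : ∀ x ∈ c, ∀ y ∈ a, ¬ arc x y := by
  induction hac using ReflTransGen.head_induction_on with
  | refl =>
    intro x hx y hy hxy
    by_cases hxy' : x = y
    · subst hxy'
      exact hasym x x hxy hxy
    · exact (hc.2 hx hy hxy').2.1 hxy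
  | @head a b hab _ ih =>
    intro x hx y hy hxy
    obtain ⟨-, -, hb, hbm, haW⟩ := hab
    obtain ⟨-, hyb, hyP⟩ := haW hy
    by_cases hxb : part x ∈ part '' b
    · exact hyP x (hc.1 hx) hxb hxy
    · refine (hP.card_lt hb (hc.1 hx) fun u hu => ⟨?_, ih x hx u hu, ?_⟩).ne hbm
      · exact fun h => hxb ⟨u, hu, h.symm⟩
      · exact fun hux => htri ⟨x, y, u, hxy, hyb u hu, hux⟩

theorem not_transGen_transversalBelow_self (hasym : ∀ u v, arc u v → ¬ arc v u)
    (htri : ¬ ∃ a b c, arc a b ∧ arc b c ∧ arc c a) (hP : TransversalIndepLE arc part P m)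
    (hm : 0 < m) (I : Finset V) : ¬ TransGen (TransversalBelow arc part P m) I I := by
  intro h
  obtain ⟨J, hIJ, hJ, hJm, -, hIm, hJW⟩ := TransGen.tail'_iff.1 h
  obtain ⟨x, hx⟩ := card_pos.1 (hJm ▸ hm)
  obtain ⟨y, hy⟩ := card_pos.1 (hIm ▸ hm)
  exact not_arc_of_reflTransGen_transversalBelow hasym htri hP hIJ hJ x hx y hy
    ((hJW hx).2.1 y hy)

theorem exists_minimal_transversalBelow [Finite V] (hasym : ∀ u v, arc u v → ¬ arc v u)
    (htri : ¬ ∃ a b c, arc a b ∧ arc b c ∧ arc c a) (hP : TransversalIndepLE arc part P m)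
    (hm : 0 < m) (hs : IsIndepTransversal arc part P s) (hsm : s.card = m) :
    ∃ I, IsIndepTransversal arc part P I ∧ I.card = m ∧
      ∀ J, IsIndepTransversal arc part P J → J.card = m →
        ¬ ↑J ⊆ strongDominators arc part P I := by
  have : Std.Irrefl (TransGen (TransversalBelow arc part P m)) :=
    ⟨not_transGen_transversalBelow_self hasym htri hP hm⟩
  obtain ⟨I, ⟨hI, hIm⟩, hmin⟩ :=
    (Finite.wellFounded_of_trans_of_irrefl (TransGen (TransversalBelow arc part P m))).has_min
      {I | IsIndepTransversal arc part P I ∧ I.card = m} ⟨s, hs, hsm⟩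
  exact ⟨I, hI, hIm, fun J hJ hJm hJW => hmin J ⟨hJ, hJm⟩ (.single ⟨hJ, hJm, hI, hIm, hJW⟩)⟩

theorem classesDominate_union [DecidableEq ι] {I : Finset V} {SX : V → Finset ι} {SZ : Finset ι}
    (hI : ↑I ⊆ P)
    (hX : ∀ u ∈ I, ClassesDominate arc part {x ∈ P | IsIndepPair arc part x u} (SX u))
    (hZ : ClassesDominate arc part (strongDominators arc part P I) SZ) :
    ClassesDominate arc part P (I.image part ∪ I.biUnion SX ∪ SZ) := by
  intro v hv hvS
  simp only [mem_union, mem_biUnion, not_or, not_exists, not_and] at hvS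
  obtain ⟨⟨hvI, hvX⟩, hvZ⟩ := hvS
  by_cases hbeaten : ∃ z ∈ P, part z ∈ part '' I ∧ arc z v
  · obtain ⟨z, hz, hzI, hzv⟩ := hbeaten
    rw [← coe_image, mem_coe] at hzI
    exact ⟨z, hz, mem_union_left _ (mem_union_left _ hzI), hzv⟩
  push Not at hbeaten
  by_cases hall : ∀ u ∈ I, arc v u
  · obtain ⟨w, hw, hwS, hwv⟩ := hZ v ⟨hv, hall, hbeaten⟩ hvZ
    exact ⟨w, hw.1, mem_union_right _ hwS, hwv⟩
  push Not at hall
  obtain ⟨u, hu, hvu⟩ := hall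
  obtain ⟨w, hw, hwS, hwv⟩ := hX u hu v
    ⟨hv, fun h => hvI (h ▸ mem_image_of_mem part hu), hvu, hbeaten u (hI hu) ⟨u, hu, rfl⟩⟩
    (hvX u hu)
  exact ⟨w, hw.1, mem_union_left _ (mem_union_right _ (mem_biUnion.2 ⟨u, hu, hwS⟩)), hwv⟩

theorem card_image_union_biUnion_union_le [DecidableEq ι] {I : Finset V} {SX : V → Finset ι}
    {SZ : Finset ι} (hI : I.card = n + 1) (hSX : ∀ u ∈ I, (SX u).card ≤ hFun n)
    (hSZ : SZ.card ≤ hFun n) : (I.image part ∪ I.biUnion SX ∪ SZ).card ≤ hFun (n + 1) :=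
  calc (I.image part ∪ I.biUnion SX ∪ SZ).card
      ≤ (I.image part).card + (I.biUnion SX).card + SZ.card :=
        (card_union_le _ _).trans (Nat.add_le_add_right (card_union_le _ _) _)
    _ ≤ (n + 1) + (n + 1) * hFun n + hFun n := by
        gcongr
        · exact hI ▸ card_image_le
        · calc (I.biUnion SX).card ≤ ∑ u ∈ I, (SX u).card := card_biUnion_le
            _ ≤ ∑ _u ∈ I, hFun n := sum_le_sum hSX
            _ = (n + 1) * hFun n := by rw [sum_const, hI, smul_eq_mul]
    _ ≤ hFun (n + 1) := by linarith [add_mul_hFun_le_hFun_succ n]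

theorem exists_classesDominate_of_minimal
    (ih : ∀ Q, TransversalIndepLE arc part Q n →
      ∃ S : Finset ι, S.card ≤ hFun n ∧ ClassesDominate arc part Q S)
    (hP : TransversalIndepLE arc part P (n + 1)) {I : Finset V}
    (hI : IsIndepTransversal arc part P I) (hIcard : I.card = n + 1)
    (hmin : ∀ J, IsIndepTransversal arc part P J → J.card = n + 1 →
      ¬ ↑J ⊆ strongDominators arc part P I) :
    ∃ S : Finset ι, S.card ≤ hFun (n + 1) ∧ ClassesDominate arc part P S := by
  classical
  have hX : ∀ u ∈ I, TransversalIndepLE arc part {x ∈ P | IsIndepPair arc part x u} n :=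
    fun u hu s hs => Nat.lt_succ_iff.1 <|
      hP.card_lt (hs.mono_set (Set.sep_subset _ _)) (hI.1 hu) fun y hy => (hs.1 hy).2.symm
  have hZ : TransversalIndepLE arc part (strongDominators arc part P I) n :=
    .of_forall_card_ne fun J hJ hJm => hmin J (hJ.mono_set (Set.sep_subset _ _)) hJm hJ.1
  choose! SX hSXcard hSX using fun u hu => ih _ (hX u hu)
  obtain ⟨SZ, hSZcard, hSZ⟩ := ih _ hZ
  exact ⟨_, card_image_union_biUnion_union_le hIcard hSXcard hSZcard,
    classesDominate_union hI.1 hSX hSZ⟩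

theorem exists_classesDominate [Finite V] (hasym : ∀ u v, arc u v → ¬ arc v u)
    (htri : ¬ ∃ a b c, arc a b ∧ arc b c ∧ arc c a) (β : ℕ) (P : Set V)
    (hP : TransversalIndepLE arc part P β) :
    ∃ S : Finset ι, S.card ≤ hFun β ∧ ClassesDominate arc part P S := by
  induction β generalizing P with
  | zero =>
    exact ⟨∅, by simp, fun v hv _ => absurd (hP {v} ⟨by simpa, by simp⟩) (by simp)⟩
  | succ n ih =>
    by_cases hne : ∃ I, IsIndepTransversal arc part P I ∧ I.card = n + 1
    · obtain ⟨I₀, hI₀, hI₀card⟩ := hne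
      obtain ⟨I, hI, hIcard, hmin⟩ :=
        exists_minimal_transversalBelow hasym htri hP n.succ_pos hI₀ hI₀card
      exact exists_classesDominate_of_minimal ih hP hI hIcard hmin
    · push Not at hne
      obtain ⟨S, hScard, hS⟩ := ih P (.of_forall_card_ne hne)
      exact ⟨S, hScard.trans (by nlinarith [add_mul_hFun_le_hFun_succ n]), hS⟩

end

theorem multipartite_domination_le_hFun_general
    (V ι : Type) [Fintype V]
    (arc : V → V → Prop) (part : V → ι)
    (hasym : ∀ u v, arc u v → ¬ arc v u)
    (htri : ¬ ∃ a b c, arc a b ∧ arc b c ∧ arc c a)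
    (β : ℕ)
    (hbeta : IsGreatest {n : ℕ | ∃ s : Finset V, s.card = n ∧
        (∀ u ∈ s, ∀ v ∈ s, u ≠ v → part u ≠ part v) ∧
        (∀ u ∈ s, ∀ v ∈ s, u ≠ v → ¬ arc u v)} β) :
    ∃ S : Finset ι, S.card ≤ hFun β ∧
      ∀ v : V, part v ∉ S → ∃ w : V, part w ∈ S ∧ arc w v := by
  have hle : TransversalIndepLE arc part Set.univ β := fun s hs =>
    hbeta.2 ⟨s, rfl, fun _ hu _ hv huv => (hs.2 hu hv huv).1,
      fun _ hu _ hv huv => (hs.2 hu hv huv).2.1⟩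
  obtain ⟨S, hScard, hS⟩ := exists_classesDominate hasym htri β Set.univ hle
  refine ⟨S, hScard, fun v hv => ?_⟩
  obtain ⟨w, -, hw⟩ := hS v trivial hv
  exact ⟨w, hw⟩

/-- If `D` is a finite multipartite digraph with no cyclic triangle
and transversal independence number `β ≥ 1`, then `k(D) ≤ hFun β`. -/
theorem multipartite_domination_le_hFun
    (V ι : Type) [Fintype V] [Fintype ι]
    (arc : V → V → Prop) (part : V → ι)
    (hirr : ∀ v, ¬ arc v v)
    (hasym : ∀ u v, arc u v → ¬ arc v u)
    (hpart : ∀ u v, arc u v → part u ≠ part v)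
    (htri : ¬ ∃ a b c, arc a b ∧ arc b c ∧ arc c a)
    (β : ℕ) (hβ : 1 ≤ β)
    (hbeta : IsGreatest {n : ℕ | ∃ s : Finset V, s.card = n ∧
        (∀ u ∈ s, ∀ v ∈ s, u ≠ v → part u ≠ part v) ∧
        (∀ u ∈ s, ∀ v ∈ s, u ≠ v → ¬ arc u v)} β) :
    ∃ S : Finset ι, S.card ≤ hFun β ∧
      ∀ v : V, part v ∉ S → ∃ w : V, part w ∈ S ∧ arc w v :=
  multipartite_domination_le_hFun_general V ι arc part hasym htri β hbeta
end

section
/- Let D be a finite multipartite digraph with at least one partite class, containing no cyclic triangle, and with β(D) = 1 (i.e., any two vertices from distinct partite classes are joined by an arc in one of the two directions). Then k(D) = 1: there is a single partite class K such that every vertex outside K is an outneighbor of some vertex of K. -/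
/-- A transitive (along distinct endpoints) and total relation on a nonempty
finite set has a top element. -/
lemma exists_top_of_trans_total {α : Type} (R : α → α → Prop)
    (htrans : ∀ a b c, a ≠ c → R a b → R b c → R a c) :
    ∀ s : Finset α, s.Nonempty →
      (∀ a ∈ s, ∀ b ∈ s, a ≠ b → R a b ∨ R b a) →
      ∃ K ∈ s, ∀ j ∈ s, j ≠ K → R K j := by
  classical
  intro s
  induction s using Finset.induction_on with
  | empty => intro h; exact absurd rfl h.ne_empty
  | @insert a s ha ih =>
    intro _ htot
    by_cases hse : s.Nonempty
    · obtain ⟨K, hK, hKtop⟩ := ih hse (fun x hx y hy hxy =>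
        htot x (Finset.mem_insert_of_mem hx) y (Finset.mem_insert_of_mem hy) hxy)
      have haK : a ≠ K := fun h => ha (h ▸ hK)
      rcases htot K (Finset.mem_insert_of_mem hK) a (Finset.mem_insert_self a s)
          haK.symm with hKa | haK2
      · refine ⟨K, Finset.mem_insert_of_mem hK, fun j hj hjK => ?_⟩
        rcases Finset.mem_insert.1 hj with rfl | hj
        · exact hKa
        · exact hKtop j hj hjK
      · refine ⟨a, Finset.mem_insert_self a s, fun j hj hja => ?_⟩
        rcases Finset.mem_insert.1 hj with rfl | hj
        · exact absurd rfl hja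
        · have haj : a ≠ j := fun h => ha (h ▸ hj)
          by_cases hjK : j = K
          · exact hjK ▸ haK2
          · exact htrans a K j haj haK2 (hKtop j hj hjK)
    · have : s = ∅ := Finset.not_nonempty_iff_eq_empty.1 hse
      subst this
      exact ⟨a, Finset.mem_insert_self a ∅, fun j hj hja => by
        simp at hj; exact absurd hj hja⟩

/-- A finite multipartite digraph with at least one partite class,
no cyclic triangle, and `β(D) = 1` (any two vertices in distinct classes are joined
by an arc) is dominated by a single partite class. -/
theorem multipartite_beta_one_dominating_class
    (V ι : Type) [Fintype V] [Fintype ι] [Nonempty ι]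
    (arc : V → V → Prop) (part : V → ι)
    (hirr : ∀ v, ¬ arc v v)
    (hasym : ∀ u v, arc u v → ¬ arc v u)
    (hpart : ∀ u v, arc u v → part u ≠ part v)
    (htri : ¬ ∃ a b c, arc a b ∧ arc b c ∧ arc c a)
    (hβ1 : ∀ u v : V, part u ≠ part v → arc u v ∨ arc v u) :
    ∃ K : ι, ∀ v : V, part v ≠ K → ∃ w : V, part w = K ∧ arc w v := by
  classical
  -- `R i j` : class `i` dominates every vertex of class `j`.
  let R : ι → ι → Prop := fun i j => ∀ x : V, part x = j → ∃ w : V, part w = i ∧ arc w x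
  by_cases hV : IsEmpty V
  · exact ⟨Classical.arbitrary ι, fun v _ => (hV.false v).elim⟩
  rw [not_isEmpty_iff] at hV
  let s : Finset ι := Finset.univ.image part
  have hmem : ∀ v : V, part v ∈ s := fun v => Finset.mem_image.2 ⟨v, Finset.mem_univ _, rfl⟩
  have hne : s.Nonempty := ⟨part hV.some, hmem hV.some⟩
  have htrans : ∀ a b c, a ≠ c → R a b → R b c → R a c := by
    intro a b c hac hab hbc x hx
    obtain ⟨y, hy, hyx⟩ := hbc x hx
    obtain ⟨z, hz, hzy⟩ := hab y hy
    have hzx : part z ≠ part x := by rw [hz, hx]; exact hac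
    rcases hβ1 z x hzx with h | h
    · exact ⟨z, hz, h⟩
    · exact absurd ⟨z, y, x, hzy, hyx, h⟩ htri
  have htot : ∀ a ∈ s, ∀ b ∈ s, a ≠ b → R a b ∨ R b a := by
    intro a _ b _ hab
    by_contra hcon
    push_neg at hcon
    obtain ⟨h1, h2⟩ := hcon
    simp only [R, not_forall] at h1 h2
    obtain ⟨x, hx, hx2⟩ := h1
    obtain ⟨y, hy, hy2⟩ := h2
    rw [not_exists] at hx2 hy2
    have hxy : part x ≠ part y := by rw [hx, hy]; exact hab.symm
    rcases hβ1 x y hxy with h | h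
    · exact hy2 x ⟨hx, h⟩
    · exact hx2 y ⟨hy, h⟩
  obtain ⟨K, _, hKtop⟩ := exists_top_of_trans_total R htrans s hne htot
  exact ⟨K, fun v hv => hKtop (part v) (hmem v) hv v rfl⟩
end

section
/- Let D be a finite multipartite digraph with at least two partite classes, containing no cyclic triangle, and with β(D) = 1. Then there is a partite class K which is a dominating set, a vertex k ∈ K, and a partite class L ≠ K, such that every vertex of D lying outside K ∪ L is an outneighbor of k. -/
/-!
Since `β(D) = 1` and there is no cyclic triangle, `a → b → c` with `a`, `c` in different classes
forces `a → c`. Say that a class `A` strongly beats a class `B` if a single vertex of `A` beats all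
of `B`; by the previous remark this is a strict order on the classes, and we take `K` maximal.
Then `K` is dominating, since a vertex not beaten by `K` would strongly beat `K`.

If two classes `A ≠ L` outside `K` were not strongly beaten by `K`, then in one of the two cyclic
orders of `K`, `A`, `L` no class would strongly beat its successor, so every vertex of these
classes would have an in-neighbour in the next class and, by finiteness, such arcs would close a
cycle. But a walk following a cyclic pattern of three classes can be shortcut by transitivity
to an arc, or to a path of length two when it returns to its starting class, so it never closes.
Hence `K` strongly beats every class except possibly one class `L`.

Finally a vertex `k ∈ K` of maximal out-degree beats all of every class `B` that `K` strongly
beats: if `b ∈ B` beat `k`, the vertex of `K` beating all of `B` would beat `b` and, through `b`,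
every out-neighbour of `k`.
-/

section

variable {V ι : Type*} {arc : V → V → Prop} {part : V → ι}

def ClassTransitive (arc : V → V → Prop) (part : V → ι) : Prop :=
  ∀ a b c, arc a b → arc b c → part a ≠ part c → arc a c

theorem classTransitive_of_not_cyclicTriangle (htri : ¬ ∃ a b c, arc a b ∧ arc b c ∧ arc c a)
    (hβ : ∀ u v, part u ≠ part v → arc u v ∨ arc v u) : ClassTransitive arc part :=
  fun a b c hab hbc hac => (hβ a c hac).resolve_right fun hca => htri ⟨a, b, c, hab, hbc, hca⟩

def StronglyBeats (arc : V → V → Prop) (part : V → ι) (A B : ι) : Prop :=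
  ∃ a, part a = A ∧ ∀ b, part b = B → arc a b

theorem exists_arc_of_not_stronglyBeats (hβ : ∀ u v, part u ≠ part v → arc u v ∨ arc v u)
    {A B : ι} (hAB : A ≠ B) (h : ¬ StronglyBeats arc part A B) {v : V} (hv : part v = A) :
    ∃ w, part w = B ∧ arc w v := by
  by_contra! hno
  exact h ⟨v, hv, fun b hb => (hβ v b (by rw [hv, hb]; exact hAB)).resolve_right (hno b hb)⟩

namespace StronglyBeats

theorem asymm (hasym : ∀ u v, arc u v → ¬ arc v u) {A B : ι}
    (hAB : StronglyBeats arc part A B) : ¬ StronglyBeats arc part B A := by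
  obtain ⟨a, ha, hab⟩ := hAB
  rintro ⟨b, hb, hba⟩
  exact hasym a b (hab b hb) (hba a ha)

theorem trans (hasym : ∀ u v, arc u v → ¬ arc v u) (htrans : ClassTransitive arc part)
    {A B C : ι} (hAB : StronglyBeats arc part A B) (hBC : StronglyBeats arc part B C) :
    StronglyBeats arc part A C := by
  have hAC : A ≠ C := by
    rintro rfl
    exact asymm hasym hAB hBC
  obtain ⟨a, ha, hab⟩ := hAB
  obtain ⟨b, hb, hbc⟩ := hBC
  exact ⟨a, ha, fun c hc => htrans a b c (hab b hb) (hbc c hc) (by rw [ha, hc]; exact hAC)⟩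

end StronglyBeats

theorem exists_forall_not_stronglyBeats [Finite ι] [Nonempty ι]
    (hasym : ∀ u v, arc u v → ¬ arc v u) (htrans : ClassTransitive arc part) :
    ∃ K, ∀ A, ¬ StronglyBeats arc part A K := by
  have : IsTrans ι (StronglyBeats arc part) := ⟨fun _ _ _ => StronglyBeats.trans hasym htrans⟩
  have : Std.Irrefl (StronglyBeats arc part) := ⟨fun _ h => StronglyBeats.asymm hasym h h⟩
  obtain ⟨K, -, hK⟩ :=
    (Finite.wellFounded_of_trans_of_irrefl (StronglyBeats arc part)).has_min Set.univ
      Set.univ_nonempty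
  exact ⟨K, fun A => hK A trivial⟩

theorem not_transGen_self_of_pattern (hasym : ∀ u v, arc u v → ¬ arc v u)
    (htrans : ClassTransitive arc part) {P : ι → ι → Prop}
    (hP : ∀ A B C, P A B → P B C → A ≠ C) (u : V) :
    ¬ Relation.TransGen (fun a b => arc a b ∧ P (part a) (part b)) u u := by
  have hPirrefl : ∀ A, ¬ P A A := fun A h => hP A A A h h rfl
  have shortcut : ∀ v, Relation.TransGen (fun a b => arc a b ∧ P (part a) (part b)) u v →
      (part u ≠ part v → arc u v) ∧
        (part u = part v → ∃ w, arc u w ∧ arc w v ∧ P (part w) (part v)) := by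
    intro v h
    induction h with
    | single hR => exact ⟨fun _ => hR.1, fun h => absurd (h ▸ hR.2) (hPirrefl _)⟩
    | @tail v v' _ hR ih =>
      have hvv' : part v ≠ part v' := fun h => hPirrefl _ (h ▸ hR.2)
      by_cases huv : part u = part v
      · obtain ⟨w, huw, hwv, hPwv⟩ := ih.2 huv
        have hwv' : arc w v' := htrans w v v' hwv hR.1 (hP _ _ _ hPwv hR.2)
        have huw' : part u ≠ part v' := huv ▸ hvv'
        exact ⟨fun _ => htrans u w v' huw hwv' huw', fun h => absurd h huw'⟩
      · exact ⟨htrans u v v' (ih.1 huv) hR.1, fun h => ⟨v, ih.1 huv, hR.1, h ▸ hR.2⟩⟩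
  intro h
  obtain ⟨w, huw, hwu, -⟩ := (shortcut u h).2 rfl
  exact hasym u w huw hwu

theorem exists_forall_not_pattern_arc [Finite V] (hasym : ∀ u v, arc u v → ¬ arc v u)
    (htrans : ClassTransitive arc part) {P : ι → ι → Prop}
    (hP : ∀ A B C, P A B → P B C → A ≠ C) {S : Set V} (hS : S.Nonempty) :
    ∃ v ∈ S, ∀ w ∈ S, arc w v → ¬ P (part w) (part v) := by
  set R : V → V → Prop := fun a b => arc a b ∧ P (part a) (part b)
  have : Std.Irrefl (Relation.TransGen R) := ⟨not_transGen_self_of_pattern hasym htrans hP⟩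
  have hwf : WellFounded R :=
    Subrelation.wf Relation.TransGen.single
      (Finite.wellFounded_of_trans_of_irrefl (Relation.TransGen R))
  obtain ⟨v, hv, hmin⟩ := hwf.has_min S hS
  exact ⟨v, hv, fun w hw hwv hPwv => hmin w hw ⟨hwv, hPwv⟩⟩

theorem stronglyBeats_of_three [Finite V] (hβ : ∀ u v, part u ≠ part v → arc u v ∨ arc v u)
    (hasym : ∀ u v, arc u v → ¬ arc v u) (htrans : ClassTransitive arc part) {X Y Z : ι}
    (hXY : X ≠ Y) (hYZ : Y ≠ Z) (hZX : Z ≠ X) (hX : ∃ x, part x = X) :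
    StronglyBeats arc part X Y ∨ StronglyBeats arc part Y Z ∨ StronglyBeats arc part Z X := by
  by_contra! h
  obtain ⟨hnXY, hnYZ, hnZX⟩ := h
  obtain ⟨x, hx⟩ := hX
  set P : ι → ι → Prop := fun A B => (A = Y ∧ B = X) ∨ (A = Z ∧ B = Y) ∨ (A = X ∧ B = Z)
  have hP : ∀ A B C, P A B → P B C → A ≠ C := by
    rintro A B C (⟨rfl, rfl⟩ | ⟨rfl, rfl⟩ | ⟨rfl, rfl⟩) (⟨h, rfl⟩ | ⟨h, rfl⟩ | ⟨h, rfl⟩) <;>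
      first | exact absurd h ‹_› | exact absurd h.symm ‹_› | assumption
  obtain ⟨v, hv, hmin⟩ := exists_forall_not_pattern_arc hasym htrans hP
    (S := {v | part v = X ∨ part v = Y ∨ part v = Z}) ⟨x, Or.inl hx⟩
  rcases hv with hv | hv | hv
  · obtain ⟨w, hw, hwv⟩ := exists_arc_of_not_stronglyBeats hβ hXY hnXY hv
    exact hmin w (Or.inr (Or.inl hw)) hwv (Or.inl ⟨hw, hv⟩)
  · obtain ⟨w, hw, hwv⟩ := exists_arc_of_not_stronglyBeats hβ hYZ hnYZ hv
    exact hmin w (Or.inr (Or.inr hw)) hwv (Or.inr (Or.inl ⟨hw, hv⟩))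
  · obtain ⟨w, hw, hwv⟩ := exists_arc_of_not_stronglyBeats hβ hZX hnZX hv
    exact hmin w (Or.inl hw) hwv (Or.inr (Or.inr ⟨hw, hv⟩))

theorem exists_ne_forall_stronglyBeats [Finite V] [Nontrivial ι]
    (hβ : ∀ u v, part u ≠ part v → arc u v ∨ arc v u) (hasym : ∀ u v, arc u v → ¬ arc v u)
    (htrans : ClassTransitive arc part) {K : ι} (hK : ∀ A, ¬ StronglyBeats arc part A K)
    (hKne : ∃ k, part k = K) :
    ∃ L, L ≠ K ∧ ∀ A, A ≠ K → A ≠ L → StronglyBeats arc part K A := by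
  by_cases hex : ∃ L, L ≠ K ∧ ¬ StronglyBeats arc part K L
  · obtain ⟨L, hLK, hL⟩ := hex
    refine ⟨L, hLK, fun A hAK hAL => by_contra fun hA => ?_⟩
    have hSAL : StronglyBeats arc part A L :=
      ((stronglyBeats_of_three hβ hasym htrans (Ne.symm hAK) hAL hLK hKne).resolve_left
        hA).resolve_right (hK L)
    have hSLA : StronglyBeats arc part L A :=
      ((stronglyBeats_of_three hβ hasym htrans (Ne.symm hLK) (Ne.symm hAL) hAK hKne).resolve_left
        hL).resolve_right (hK A)
    exact StronglyBeats.asymm hasym hSAL hSLA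
  · push Not at hex
    obtain ⟨L, hLK⟩ := exists_ne K
    exact ⟨L, hLK, fun A hAK _ => hex A hAK⟩

theorem arc_of_stronglyBeats_of_ncard_le [Finite V]
    (hβ : ∀ u v, part u ≠ part v → arc u v ∨ arc v u) (hasym : ∀ u v, arc u v → ¬ arc v u)
    (hpart : ∀ u v, arc u v → part u ≠ part v) (htrans : ClassTransitive arc part) {k b : V}
    (hk : ∀ k', part k' = part k → {v | arc k' v}.ncard ≤ {v | arc k v}.ncard)
    (hkb : StronglyBeats arc part (part k) (part b)) : arc k b := by
  have hkb_ne : part k ≠ part b := fun h => StronglyBeats.asymm hasym hkb (h ▸ hkb)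
  obtain ⟨k', hk', hk'b⟩ := hkb
  by_contra hnkb
  have hbk : arc b k := (hβ k b hkb_ne).resolve_left hnkb
  have hsub : {v | arc k v} ⊂ {v | arc k' v} := by
    refine (Set.ssubset_iff_of_subset fun v hkv => ?_).2 ⟨b, hk'b b rfl, hnkb⟩
    by_cases hv : part v = part b
    · exact hk'b v hv
    · have hbv : arc b v := htrans b k v hbk hkv (Ne.symm hv)
      exact htrans k' b v (hk'b b rfl) hbv (hk' ▸ hpart k v hkv)
  exact (Set.ncard_lt_ncard hsub).not_ge (hk k' hk')

end

theorem multipartite_beta_one_strong_domination_general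
    (V ι : Type) [Fintype V] [Fintype ι]
    (arc : V → V → Prop) (part : V → ι)
    (hsurj : Function.Surjective part)
    (htwo : ∃ i j : ι, i ≠ j)
    (hasym : ∀ u v, arc u v → ¬ arc v u)
    (hpart : ∀ u v, arc u v → part u ≠ part v)
    (htri : ¬ ∃ a b c, arc a b ∧ arc b c ∧ arc c a)
    (hβ1 : ∀ u v : V, part u ≠ part v → arc u v ∨ arc v u) :
    ∃ K : ι, (∀ v : V, part v ≠ K → ∃ w : V, part w = K ∧ arc w v) ∧
      ∃ k : V, part k = K ∧ ∃ L : ι, L ≠ K ∧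
        ∀ v : V, part v ≠ K → part v ≠ L → arc k v := by
  have : Nontrivial ι := ⟨htwo⟩
  have htrans := classTransitive_of_not_cyclicTriangle htri hβ1
  obtain ⟨K, hK⟩ := exists_forall_not_stronglyBeats hasym htrans
  obtain ⟨L, hLK, hL⟩ := exists_ne_forall_stronglyBeats hβ1 hasym htrans hK (hsurj K)
  obtain ⟨k, hkK, hkmax⟩ :=
    Set.exists_max_image {k | part k = K} (fun k => {v | arc k v}.ncard) (Set.toFinite _)
      (hsurj K)
  refine ⟨K, fun v hv => exists_arc_of_not_stronglyBeats hβ1 hv (hK _) rfl, k, hkK, L, hLK,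
    fun v hvK hvL => ?_⟩
  refine arc_of_stronglyBeats_of_ncard_le hβ1 hasym hpart htrans
    (fun k' hk' => hkmax k' (hk'.trans hkK)) ?_
  rw [hkK]
  exact hL _ hvK hvL

/-- In a finite multipartite digraph with at least two partite
classes (all classes nonempty, i.e. `part` surjective), no cyclic triangle and
`β(D) = 1`, there is a dominating partite class `K`, a vertex `k ∈ K`, and a class
`L ≠ K`, such that `k` dominates every vertex outside `K ∪ L`. -/
theorem multipartite_beta_one_strong_domination
    (V ι : Type) [Fintype V] [Fintype ι]
    (arc : V → V → Prop) (part : V → ι)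
    (hsurj : Function.Surjective part)
    (htwo : ∃ i j : ι, i ≠ j)
    (hirr : ∀ v, ¬ arc v v)
    (hasym : ∀ u v, arc u v → ¬ arc v u)
    (hpart : ∀ u v, arc u v → part u ≠ part v)
    (htri : ¬ ∃ a b c, arc a b ∧ arc b c ∧ arc c a)
    (hβ1 : ∀ u v : V, part u ≠ part v → arc u v ∨ arc v u) :
    ∃ K : ι, (∀ v : V, part v ≠ K → ∃ w : V, part w = K ∧ arc w v) ∧
      ∃ k : V, part k = K ∧ ∃ L : ι, L ≠ K ∧
        ∀ v : V, part v ≠ K → part v ≠ L → arc k v :=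
  multipartite_beta_one_strong_domination_general V ι arc part hsurj htwo hasym hpart htri hβ1
end

section
/- Let D be a finite multipartite digraph containing no cyclic triangle with β(D) = 1. Suppose x₁, x₂ lie in a partite class X, y lies in a partite class Y ≠ X, and the arcs (x₂, y) and (y, x₁) are present in D. Then for every vertex z lying in a partite class Z with Z ≠ X and Z ≠ Y, if (x₁, z) is an arc of D then (x₂, z) is also an arc of D. -/
/-- Observation 1. In a finite multipartite digraph with no cyclic
triangle and `β(D) = 1`: if `x₁, x₂ ∈ X`, `y ∈ Y ≠ X` with arcs `(x₂,y)` and `(y,x₁)`,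
then for any `z` in a class `Z ∉ {X, Y}`, an arc `(x₁,z)` forces the arc `(x₂,z)`. -/
theorem multipartite_obs1
    (V ι : Type) [Fintype V] [Fintype ι]
    (arc : V → V → Prop) (part : V → ι)
    (hirr : ∀ v, ¬ arc v v)
    (hasym : ∀ u v, arc u v → ¬ arc v u)
    (hpart : ∀ u v, arc u v → part u ≠ part v)
    (htri : ¬ ∃ a b c, arc a b ∧ arc b c ∧ arc c a)
    (hβ1 : ∀ u v : V, part u ≠ part v → arc u v ∨ arc v u)
    (x₁ x₂ y : V) (X Y : ι)
    (hx₁ : part x₁ = X) (hx₂ : part x₂ = X) (hy : part y = Y) (hXY : X ≠ Y)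
    (h1 : arc x₂ y) (h2 : arc y x₁) :
    ∀ z : V, ∀ Z : ι, part z = Z → Z ≠ X → Z ≠ Y → arc x₁ z → arc x₂ z := by
  intro z Z hz hZX hZY hx₁z
  by_contra hnot
  have hzx₂ : arc z x₂ := by
    rcases hβ1 z x₂ (by rw [hz, hx₂]; exact hZX) with h | h
    · exact h
    · exact absurd h hnot
  rcases hβ1 y z (by rw [hy, hz]; exact fun h => hZY h.symm) with h | h
  · exact htri ⟨x₂, y, z, h1, h, hzx₂⟩
  · exact htri ⟨x₁, z, y, hx₁z, h, h2⟩
end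

section
/- Let D be a finite multipartite digraph containing no cyclic triangle with β(D) = 1. Suppose x₁, x₂ lie in a partite class X, y₁, y₂ lie in a partite class Y ≠ X, and the arcs (x₁,y₂), (y₂,x₂), (x₂,y₁), (y₁,x₁) are present in D, forming a cyclic quadrangle. Then for every partite class Z with Z ≠ X and Z ≠ Y, the four sets Z ∩ N_+(x₁), Z ∩ N_+(y₁), Z ∩ N_+(x₂), Z ∩ N_+(y₂) are all equal, where N_+(v) denotes the set of outneighbors of v. -/
/-- Observation 2. In a finite multipartite digraph with no cyclic
triangle and `β(D) = 1`: if `x₁, x₂ ∈ X`, `y₁, y₂ ∈ Y ≠ X` form a cyclic quadrangle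
`(x₁,y₂), (y₂,x₂), (x₂,y₁), (y₁,x₁)`, then in every partite class `Z ∉ {X, Y}` the
outneighborhoods of `x₁, y₁, x₂, y₂` coincide. -/
theorem multipartite_obs2
    (V ι : Type) [Fintype V] [Fintype ι]
    (arc : V → V → Prop) (part : V → ι)
    (hirr : ∀ v, ¬ arc v v)
    (hasym : ∀ u v, arc u v → ¬ arc v u)
    (hpart : ∀ u v, arc u v → part u ≠ part v)
    (htri : ¬ ∃ a b c, arc a b ∧ arc b c ∧ arc c a)
    (hβ1 : ∀ u v : V, part u ≠ part v → arc u v ∨ arc v u)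
    (x₁ x₂ y₁ y₂ : V) (X Y : ι)
    (hx₁ : part x₁ = X) (hx₂ : part x₂ = X)
    (hy₁ : part y₁ = Y) (hy₂ : part y₂ = Y) (hXY : X ≠ Y)
    (h1 : arc x₁ y₂) (h2 : arc y₂ x₂) (h3 : arc x₂ y₁) (h4 : arc y₁ x₁) :
    ∀ Z : ι, Z ≠ X → Z ≠ Y →
      {z : V | part z = Z ∧ arc x₁ z} = {z : V | part z = Z ∧ arc y₁ z} ∧
      {z : V | part z = Z ∧ arc y₁ z} = {z : V | part z = Z ∧ arc x₂ z} ∧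
      {z : V | part z = Z ∧ arc x₂ z} = {z : V | part z = Z ∧ arc y₂ z} := by
  intro Z hZX hZY
  have step : ∀ a b z : V, arc b a → arc a z → part z ≠ part b → arc b z := by
    intro a b z hba haz hne
    rcases hβ1 b z hne.symm with h | h
    · exact h
    · exact absurd ⟨b, a, z, hba, haz, h⟩ htri
  have key : ∀ z : V, part z = Z →
      (arc x₁ z → arc y₁ z) ∧ (arc y₁ z → arc x₂ z) ∧
      (arc x₂ z → arc y₂ z) ∧ (arc y₂ z → arc x₁ z) := by
    intro z hz
    have hzY : part z ≠ Y := by rw [hz]; exact hZY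
    have hzX : part z ≠ X := by rw [hz]; exact hZX
    exact ⟨fun h => step x₁ y₁ z h4 h (hy₁ ▸ hzY),
           fun h => step y₁ x₂ z h3 h (hx₂ ▸ hzX),
           fun h => step x₂ y₂ z h2 h (hy₂ ▸ hzY),
           fun h => step y₂ x₁ z h1 h (hx₁ ▸ hzX)⟩
  refine ⟨?_, ?_, ?_⟩ <;> ext z <;> simp only [Set.mem_setOf_eq] <;>
    constructor <;> rintro ⟨hz, h⟩ <;> refine ⟨hz, ?_⟩ <;>
    obtain ⟨k1, k2, k3, k4⟩ := key z hz
  · exact k1 h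
  · exact k4 (k3 (k2 h))
  · exact k2 h
  · exact k1 (k4 (k3 h))
  · exact k3 h
  · exact k2 (k1 (k4 h))
end

section
/- If D is a finite digraph (irreflexive, with at most one arc between any two vertices) containing no directed cycle, then its domination number satisfies γ(D) ≤ α(D), where α(D) is the independence number of the underlying undirected graph. -/
/-- A finite digraph with no directed cycle (its transitive
closure is irreflexive) has domination number at most the independence number of
its underlying undirected graph. -/
theorem acyclic_digraph_domination_le_alpha
    (V : Type) [Fintype V]
    (arc : V → V → Prop)
    (hirr : ∀ v, ¬ arc v v)
    (hasym : ∀ u v, arc u v → ¬ arc v u)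
    (hacyc : ∀ v, ¬ Relation.TransGen arc v v)
    (α : ℕ)
    (halpha : IsGreatest {n : ℕ | ∃ s : Finset V, s.card = n ∧
        ∀ u ∈ s, ∀ v ∈ s, u ≠ v → ¬ arc u v} α) :
    ∃ S : Finset V, S.card ≤ α ∧
      ∀ v : V, v ∈ S ∨ ∃ w ∈ S, arc w v := by
  classical
  have htrans : IsTrans V (Relation.TransGen arc) :=
    ⟨fun _ _ _ => Relation.TransGen.trans⟩
  have hirr' : IsIrrefl V (Relation.TransGen arc) := ⟨hacyc⟩
  have wf : WellFounded (Relation.TransGen arc) :=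
    Finite.wellFounded_of_trans_of_irrefl _
  have key : ∀ T : Finset V, ∃ S : Finset V, S ⊆ T ∧
      (∀ u ∈ S, ∀ v ∈ S, u ≠ v → ¬ arc u v) ∧
      ∀ v ∈ T, v ∈ S ∨ ∃ w ∈ S, arc w v := by
    intro T
    induction T using Finset.strongInduction with
    | _ T ih =>
      rcases T.eq_empty_or_nonempty with hT | hne
      · subst hT
        exact ⟨∅, by simp, by simp, by simp⟩
      · obtain ⟨v, hvT, hmin⟩ := wf.has_min {x | x ∈ T} hne
        have hminT : ∀ u ∈ T, ¬ arc u v := fun u hu h =>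
          hmin u hu (Relation.TransGen.single h)
        set T' := T.filter (fun u => u ≠ v ∧ ¬ arc v u) with hT'
        have hsub : T' ⊂ T := by
          refine Finset.filter_ssubset.mpr ⟨v, hvT, ?_⟩
          simp
        have hT'T : T' ⊆ T := hsub.subset
        obtain ⟨S', hS'sub, hind, hdom⟩ := ih T' hsub
        have hS'T : ∀ w ∈ S', w ∈ T' := fun w hw => hS'sub hw
        have hnoarc_v : ∀ w ∈ S', ¬ arc v w := by
          intro w hw
          have := (Finset.mem_filter.mp (hS'T w hw)).2
          exact this.2
        have hnoarc_to_v : ∀ w ∈ S', ¬ arc w v := fun w hw =>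
          hminT w (hT'T (hS'T w hw))
        refine ⟨insert v S', ?_, ?_, ?_⟩
        · intro x hx
          rcases Finset.mem_insert.mp hx with rfl | hx
          · exact hvT
          · exact hT'T (hS'T x hx)
        · intro u hu w hw hne' harc
          rcases Finset.mem_insert.mp hu with hu | hu
          · rcases Finset.mem_insert.mp hw with hw | hw
            · exact hne' (hu.trans hw.symm)
            · exact hnoarc_v w hw (hu ▸ harc)
          · rcases Finset.mem_insert.mp hw with hw | hw
            · exact hnoarc_to_v u hu (hw ▸ harc)
            · exact hind u hu w hw hne' harc
        · intro u huT
          by_cases h1 : u = v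
          · exact Or.inl (Finset.mem_insert.mpr (Or.inl h1))
          · by_cases h2 : arc v u
            · exact Or.inr ⟨v, Finset.mem_insert_self _ _, h2⟩
            · have huT' : u ∈ T' := Finset.mem_filter.mpr ⟨huT, h1, h2⟩
              rcases hdom u huT' with h | ⟨w, hw, hwarc⟩
              · exact Or.inl (Finset.mem_insert_of_mem h)
              · exact Or.inr ⟨w, Finset.mem_insert_of_mem hw, hwarc⟩
  obtain ⟨S, _, hind, hdom⟩ := key Finset.univ
  refine ⟨S, halpha.2 ⟨S, rfl, hind⟩, fun v => hdom v (Finset.mem_univ v)⟩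
end

section
/- Let G be a finite perfect simple graph, i.e., for every induced subgraph of G the chromatic number equals the clique number. Let D be a clique-acyclic orientation of G, i.e., each edge of G is assigned exactly one direction so that no cyclic triangle arises. Then the domination number satisfies γ(D) ≤ α(G), where α(G) is the independence number of G. -/
/-!
Lovász's replication lemma says that blowing up a vertex of a perfect graph into a clique keeps
it perfect. Suppose every clique `K` of a perfect graph misses some maximum independent set `A_K`;
replicating each vertex `v` once for every `K` with `v ∈ A_K` gives a perfect graph with
`c · α` vertices but clique number at most `c - 1` and independence number at most `α`
(`c` the number of cliques), which cannot be coloured with `c - 1` colours. So some clique meets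
every maximum independent set; removing it lowers `α`, and induction covers the vertices by at
most `α` cliques. An orientation without cyclic triangles has a source on every clique, and the
sources of the covering cliques dominate the graph.
-/

open Finset

namespace SimpleGraph

section OnFinset

variable {W : Type*} (H : SimpleGraph W)

open scoped Classical in
noncomputable def cliqueNumOn (s : Finset W) : ℕ :=
  (s.powerset.filter fun t : Finset W => H.IsClique (t : Set W)).sup card

noncomputable def indepNumOn (s : Finset W) : ℕ := Hᶜ.cliqueNumOn s

def ColorableOn (s : Finset W) (n : ℕ) : Prop :=
  ∃ f : W → ℕ, (∀ x ∈ s, f x < n) ∧ ∀ x ∈ s, ∀ y ∈ s, H.Adj x y → f x ≠ f y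

def IsPerfect : Prop := ∀ s : Finset W, H.ColorableOn s (H.cliqueNumOn s)

variable {H} {s t : Finset W} {n : ℕ}

theorem IsClique.card_le_cliqueNumOn (hts : t ⊆ s) (ht : H.IsClique (t : Set W)) :
    #t ≤ H.cliqueNumOn s := by
  classical
  exact le_sup (f := card) (by simpa [hts] using ht)

theorem cliqueNumOn_le (h : ∀ t ⊆ s, H.IsClique (t : Set W) → #t ≤ n) :
    H.cliqueNumOn s ≤ n := by
  classical
  exact Finset.sup_le fun t ht => by simp only [mem_filter, mem_powerset] at ht; exact h t ht.1 ht.2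

variable (H) in
theorem exists_isClique_card_eq_cliqueNumOn (s : Finset W) :
    ∃ t ⊆ s, H.IsClique (t : Set W) ∧ #t = H.cliqueNumOn s := by
  classical
  obtain ⟨t, ht, hcard⟩ :=
    exists_mem_eq_sup (s.powerset.filter fun t : Finset W => H.IsClique (t : Set W))
      ⟨∅, by simp⟩ card
  simp only [mem_filter, mem_powerset] at ht
  exact ⟨t, ht.1, ht.2, hcard.symm⟩

theorem cliqueNumOn_mono (hst : s ⊆ t) : H.cliqueNumOn s ≤ H.cliqueNumOn t :=
  cliqueNumOn_le fun _u hu hclique => hclique.card_le_cliqueNumOn (hu.trans hst)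

theorem IsIndepSet.card_le_indepNumOn (hts : t ⊆ s) (ht : H.IsIndepSet (t : Set W)) :
    #t ≤ H.indepNumOn s :=
  ((isClique_compl H).2 ht).card_le_cliqueNumOn hts

theorem indepNumOn_le (h : ∀ t ⊆ s, H.IsIndepSet (t : Set W) → #t ≤ n) :
    H.indepNumOn s ≤ n :=
  cliqueNumOn_le fun t hts ht => h t hts ((isClique_compl H).1 ht)

variable (H) in
theorem exists_isIndepSet_card_eq_indepNumOn (s : Finset W) :
    ∃ t ⊆ s, H.IsIndepSet (t : Set W) ∧ #t = H.indepNumOn s := by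
  simpa only [isClique_compl, indepNumOn] using Hᶜ.exists_isClique_card_eq_cliqueNumOn s

theorem one_le_indepNumOn (hs : s.Nonempty) : 1 ≤ H.indepNumOn s := by
  obtain ⟨x, hx⟩ := hs
  simpa using IsIndepSet.card_le_indepNumOn (H := H) (t := {x}) (by simpa) (by simp)

theorem ColorableOn.mono {m : ℕ} (hnm : n ≤ m) (h : H.ColorableOn s n) : H.ColorableOn s m :=
  let ⟨f, hlt, hf⟩ := h
  ⟨f, fun x hx => (hlt x hx).trans_le hnm, hf⟩

theorem ColorableOn.of_sdiff_isIndepSet [DecidableEq W] {B : Finset W}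
    (h : H.ColorableOn (s \ B) n) (hB : H.IsIndepSet (B : Set W)) :
    H.ColorableOn s (n + 1) := by
  obtain ⟨f, hlt, hf⟩ := h
  refine ⟨fun x => if x ∈ B then n else f x, fun x hx => ?_, fun x hx y hy hxy => ?_⟩
  · by_cases hxB : x ∈ B <;> simp only [hxB, if_true, if_false]
    · exact n.lt_succ_self
    · exact (hlt x (mem_sdiff.2 ⟨hx, hxB⟩)).trans n.lt_succ_self
  · by_cases hxB : x ∈ B <;> by_cases hyB : y ∈ B <;> simp only [hxB, hyB, if_true, if_false]
    · exact absurd hxy (hB hxB hyB hxy.ne)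
    · exact (hlt y (mem_sdiff.2 ⟨hy, hyB⟩)).ne'
    · exact (hlt x (mem_sdiff.2 ⟨hx, hxB⟩)).ne
    · exact hf x (mem_sdiff.2 ⟨hx, hxB⟩) y (mem_sdiff.2 ⟨hy, hyB⟩) hxy

theorem ColorableOn.card_le_mul_indepNumOn (h : H.ColorableOn s n) :
    #s ≤ n * H.indepNumOn s := by
  classical
  obtain ⟨f, hlt, hf⟩ := h
  calc #s = ∑ i ∈ range n, #{x ∈ s | f x = i} :=
        card_eq_sum_card_fiberwise fun x hx => mem_range.2 (hlt x hx)
    _ ≤ ∑ _i ∈ range n, H.indepNumOn s := sum_le_sum fun i _ =>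
        IsIndepSet.card_le_indepNumOn (filter_subset _ _) fun x hx y hy hxy hadj => by
          simp only [coe_filter, Set.mem_ofPred_eq] at hx hy
          exact hf x hx.1 y hy.1 hadj (hx.2.trans hy.2.symm)
    _ = n * H.indepNumOn s := by rw [sum_const, card_range, smul_eq_mul]

theorem exists_mem_color_eq_of_isClique {f : W → ℕ} (hlt : ∀ x ∈ s, f x < n)
    (hf : ∀ x ∈ s, ∀ y ∈ s, H.Adj x y → f x ≠ f y) (hts : t ⊆ s)
    (ht : H.IsClique (t : Set W)) (hcard : n ≤ #t) {c : ℕ} (hc : c < n) :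
    ∃ y ∈ t, f y = c := by
  have hinj : Set.InjOn f t := fun x hx y hy hxy => by
    by_contra hne
    exact hf x (hts hx) y (hts hy) (ht hx hy hne) hxy
  have himage : t.image f = range n :=
    eq_of_subset_of_card_le (fun i hi => by
      obtain ⟨x, hx, rfl⟩ := mem_image.1 hi
      exact mem_range.2 (hlt x (hts hx)))
      (by rwa [card_range, card_image_of_injOn hinj])
  exact mem_image.1 (himage ▸ mem_range.2 hc)

theorem colorableOn_of_isIndepSet_of_cliqueNumOn_sdiff_lt [DecidableEq W] {B : Finset W} {x : W}
    (ih : ∀ u ⊂ s, H.ColorableOn u (H.cliqueNumOn u)) (hxs : x ∈ s) (hxB : x ∈ B)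
    (hB : H.IsIndepSet (B : Set W)) (hlt : H.cliqueNumOn (s \ B) < H.cliqueNumOn s) :
    H.ColorableOn s (H.cliqueNumOn s) := by
  have hsub : s \ B ⊂ s :=
    (ssubset_iff_of_subset sdiff_subset).2 ⟨x, hxs, fun h => (mem_sdiff.1 h).2 hxB⟩
  have := ((ih _ hsub).mono (Nat.le_sub_one_of_lt hlt)).of_sdiff_isIndepSet hB
  rwa [Nat.sub_add_cancel (Nat.one_le_of_lt hlt)] at this

theorem colorableOn_of_twins {x₀ x₁ : W}
    (ih : ∀ u ⊂ s, H.ColorableOn u (H.cliqueNumOn u)) (hx₀ : x₀ ∈ s) (hx₁ : x₁ ∈ s)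
    (hadj : H.Adj x₀ x₁)
    (htwin : ∀ y, y ≠ x₀ → y ≠ x₁ → (H.Adj x₀ y ↔ H.Adj x₁ y)) :
    H.ColorableOn s (H.cliqueNumOn s) := by
  classical
  obtain ⟨f, hlt, hf⟩ := ih (s.erase x₁) (erase_ssubset hx₁)
  have hx₀' : x₀ ∈ s.erase x₁ := mem_erase.2 ⟨hadj.ne, hx₀⟩
  set C := {y ∈ s.erase x₁ | f y = f x₀}.erase x₀ with hC
  have hC_mem : ∀ {y}, y ∈ C ↔ y ≠ x₀ ∧ y ≠ x₁ ∧ y ∈ s ∧ f y = f x₀ := by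
    simp [hC, and_assoc]
  refine colorableOn_of_isIndepSet_of_cliqueNumOn_sdiff_lt (B := insert x₁ C) ih hx₁
    (mem_insert_self _ _) ?_ ?_
  · rw [coe_insert, ← isClique_compl, isClique_insert]
    refine ⟨fun y hy z hz hyz => ⟨hyz, fun hadj' => ?_⟩,
      fun y hy hne => ⟨hne, fun hadj' => ?_⟩⟩
    · rw [mem_coe, hC_mem] at hy hz
      exact hf y (mem_erase.2 ⟨hy.2.1, hy.2.2.1⟩) z (mem_erase.2 ⟨hz.2.1, hz.2.2.1⟩) hadj'
        (hy.2.2.2.trans hz.2.2.2.symm)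
    · rw [mem_coe, hC_mem] at hy
      exact hf x₀ hx₀' y (mem_erase.2 ⟨hy.2.1, hy.2.2.1⟩)
        ((htwin y hy.1 hy.2.1).2 hadj') hy.2.2.2.symm
  · refine lt_of_not_ge fun hge => ?_
    obtain ⟨t, hts, ht, htcard⟩ := H.exists_isClique_card_eq_cliqueNumOn (s \ insert x₁ C)
    have hx₁t : x₁ ∉ t := fun h => (mem_sdiff.1 (hts h)).2 (mem_insert_self _ _)
    have hts' : t ⊆ s.erase x₁ := fun y hy =>
      mem_erase.2 ⟨fun h => hx₁t (h ▸ hy), (mem_sdiff.1 (hts hy)).1⟩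
    -- A maximum clique of `s.erase x₁` sees every colour, so avoiding `C` it must contain `x₀`.
    obtain ⟨y, hyt, hfy⟩ := exists_mem_color_eq_of_isClique hlt hf hts' ht
      ((cliqueNumOn_mono (erase_subset _ _)).trans (hge.trans htcard.ge)) (hlt x₀ hx₀')
    have hx₀t : x₀ ∈ t := by
      by_contra hyx₀
      refine (mem_sdiff.1 (hts hyt)).2 (mem_insert_of_mem (hC_mem.2 ⟨?_, ?_, ?_, hfy⟩))
      · exact fun h => hyx₀ (h ▸ hyt)
      · exact fun h => hx₁t (h ▸ hyt)
      · exact (mem_sdiff.1 (hts hyt)).1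
    have hins : H.IsClique (insert x₁ t : Set W) := isClique_insert.2 ⟨ht, fun z hz hne => by
      by_cases hz₀ : z = x₀
      · exact hz₀ ▸ hadj.symm
      · exact (htwin z hz₀ (Ne.symm hne)).1 (ht hx₀t hz (Ne.symm hz₀))⟩
    have := (coe_insert x₁ t ▸ hins).card_le_cliqueNumOn
      (insert_subset hx₁ (hts.trans sdiff_subset))
    rw [card_insert_of_notMem hx₁t] at this
    omega

theorem ColorableOn.of_image {W' : Type*} [DecidableEq W'] {H' : SimpleGraph W'} {φ : W → W'}
    (h : H'.ColorableOn (s.image φ) n)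
    (hφ : ∀ x ∈ s, ∀ y ∈ s, H.Adj x y → H'.Adj (φ x) (φ y)) :
    H.ColorableOn s n :=
  let ⟨f, hlt, hf⟩ := h
  ⟨f ∘ φ, fun _ hx => hlt _ (mem_image_of_mem φ hx), fun x hx y hy hxy =>
    hf _ (mem_image_of_mem φ hx) _ (mem_image_of_mem φ hy) (hφ x hx y hy hxy)⟩

theorem cliqueNumOn_image_le {W' : Type*} [DecidableEq W'] {H' : SimpleGraph W'} {φ : W → W'}
    (hinj : Set.InjOn φ s) (hφ : ∀ x ∈ s, ∀ y ∈ s, H'.Adj (φ x) (φ y) → H.Adj x y) :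
    H'.cliqueNumOn (s.image φ) ≤ H.cliqueNumOn s := by
  classical
  obtain ⟨t', ht's, ht', hcard⟩ := H'.exists_isClique_card_eq_cliqueNumOn (s.image φ)
  set t := {x ∈ s | φ x ∈ t'}
  have himage : t.image φ = t' := by
    refine (image_subset_iff.2 fun x hx => (mem_filter.1 hx).2).antisymm fun y hy => ?_
    obtain ⟨x, hx, rfl⟩ := mem_image.1 (ht's hy)
    exact mem_image_of_mem φ (mem_filter.2 ⟨hx, hy⟩)
  have ht : H.IsClique (t : Set W) := fun x hx y hy hxy => by
    rw [mem_coe, mem_filter] at hx hy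
    exact hφ x hx.1 y hy.1 (ht' hx.2 hy.2 fun h => hxy (hinj hx.1 hy.1 h))
  calc H'.cliqueNumOn (s.image φ) = #(t.image φ) := by rw [himage, hcard]
    _ ≤ #t := card_image_le
    _ ≤ H.cliqueNumOn s := ht.card_le_cliqueNumOn (filter_subset _ _)

theorem IsClique.card_inter_le_one [DecidableEq W] (hs : H.IsClique (s : Set W))
    (ht : H.IsIndepSet (t : Set W)) : #(s ∩ t) ≤ 1 :=
  card_le_one.2 fun _ hx _ hy => by_contra fun hxy =>
    ht (mem_inter.1 hx).2 (mem_inter.1 hy).2 hxy (hs (mem_inter.1 hx).1 (mem_inter.1 hy).1 hxy)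

end OnFinset

section Blowup

variable {V : Type*} (G : SimpleGraph V)

def blowup : SimpleGraph (V × ℕ) where
  Adj x y := x ≠ y ∧ (x.1 = y.1 ∨ G.Adj x.1 y.1)
  symm := ⟨fun _ _ h => ⟨h.1.symm, h.2.imp Eq.symm fun h => h.symm⟩⟩
  loopless := ⟨fun _ h => h.1 rfl⟩

def blowupSet (t : Finset V) (k : V → ℕ) : Finset (V × ℕ) :=
  (t.sigma fun v => range (k v)).map (Equiv.sigmaEquivProd V ℕ).toEmbedding

variable {G} {t : Finset V} {k : V → ℕ}

@[simp] theorem blowup_adj {x y : V × ℕ} :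
    G.blowup.Adj x y ↔ x ≠ y ∧ (x.1 = y.1 ∨ G.Adj x.1 y.1) := Iff.rfl

@[simp] theorem mem_blowupSet {p : V × ℕ} :
    p ∈ blowupSet t k ↔ p.1 ∈ t ∧ p.2 < k p.1 := by
  simp [blowupSet]

theorem card_blowupSet : #(blowupSet t k) = ∑ v ∈ t, k v := by
  simp [blowupSet]

theorem IsClique.image_fst [DecidableEq V] {C : Finset (V × ℕ)}
    (hC : G.blowup.IsClique (C : Set (V × ℕ))) : G.IsClique (C.image Prod.fst : Set V) := by
  intro u hu v hv huv
  obtain ⟨x, hx, rfl⟩ := mem_image.1 hu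
  obtain ⟨y, hy, rfl⟩ := mem_image.1 hv
  exact (hC hx hy fun h => huv (h ▸ rfl)).2.resolve_left huv

theorem cliqueNumOn_blowupSet_le {m : ℕ}
    (h : ∀ K ⊆ t, G.IsClique (K : Set V) → ∑ v ∈ K, k v ≤ m) :
    G.blowup.cliqueNumOn (blowupSet t k) ≤ m := by
  classical
  refine cliqueNumOn_le fun C hC hCcl => ?_
  have hCt : C.image Prod.fst ⊆ t := image_subset_iff.2 fun p hp => (mem_blowupSet.1 (hC hp)).1
  calc #C ≤ #(blowupSet (C.image Prod.fst) k) := card_le_card fun p hp =>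
        mem_blowupSet.2 ⟨mem_image_of_mem _ hp, (mem_blowupSet.1 (hC hp)).2⟩
    _ ≤ m := card_blowupSet.trans_le (h _ hCt hCcl.image_fst)

theorem indepNumOn_blowup_le {s : Finset (V × ℕ)} (hs : ∀ p ∈ s, p.1 ∈ t) :
    G.blowup.indepNumOn s ≤ G.indepNumOn t := by
  classical
  refine indepNumOn_le fun B hBs hB => ?_
  have hinj : Set.InjOn Prod.fst (B : Set (V × ℕ)) := fun x hx y hy h =>
    by_contra fun hxy => hB hx hy hxy ⟨hxy, Or.inl h⟩
  rw [← card_image_of_injOn hinj]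
  refine IsIndepSet.card_le_indepNumOn (image_subset_iff.2 fun p hp => hs p (hBs hp)) ?_
  intro u hu v hv huv hadj
  obtain ⟨x, hx, rfl⟩ := mem_image.1 hu
  obtain ⟨y, hy, rfl⟩ := mem_image.1 hv
  exact hB hx hy (fun h => huv (h ▸ rfl)) ⟨fun h => huv (h ▸ rfl), Or.inr hadj⟩

theorem colorableOn_blowup_of_injOn [DecidableEq V] {s : Finset (V × ℕ)}
    (hG : G.ColorableOn (s.image Prod.fst) (G.cliqueNumOn (s.image Prod.fst)))
    (hinj : Set.InjOn Prod.fst (s : Set (V × ℕ))) :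
    G.blowup.ColorableOn s (G.blowup.cliqueNumOn s) :=
  (hG.mono (cliqueNumOn_image_le hinj fun _ _ _ _ h =>
      blowup_adj.2 ⟨fun hxy => h.ne (congrArg Prod.fst hxy), Or.inr h⟩)).of_image
    fun _ hx _ hy h => h.2.resolve_left fun h' => h.1 (hinj hx hy h')

theorem IsPerfect.blowup (hG : G.IsPerfect) : G.blowup.IsPerfect := by
  classical
  intro s
  induction s using Finset.strongInduction with
  | H s ih =>
  by_cases hinj : Set.InjOn Prod.fst (s : Set (V × ℕ))
  · exact colorableOn_blowup_of_injOn (hG _) hinj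
  · obtain ⟨x₀, hx₀, x₁, hx₁, hfst, hne⟩ :
        ∃ x₀ ∈ s, ∃ x₁ ∈ s, x₀.1 = x₁.1 ∧ x₀ ≠ x₁ := by
      simpa [Set.InjOn] using hinj
    exact colorableOn_of_twins ih hx₀ hx₁ ⟨hne, Or.inl hfst⟩ fun y hy₀ hy₁ => by
      simp [Ne.symm hy₀, Ne.symm hy₁, hfst]

end Blowup

variable {V : Type*} {G : SimpleGraph V}

theorem exists_isClique_forall_not_disjoint (hP : G.blowup.IsPerfect) {t : Finset V}
    (ht : t.Nonempty) :
    ∃ K ⊆ t, G.IsClique (K : Set V) ∧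
      ∀ A ⊆ t, G.IsIndepSet (A : Set V) → #A = G.indepNumOn t → ¬ Disjoint K A := by
  classical
  by_contra! hcon
  set 𝒦 := t.powerset.filter fun K : Finset V => G.IsClique (K : Set V)
  have hex : ∀ K ∈ 𝒦,
      ∃ A ⊆ t, G.IsIndepSet (A : Set V) ∧ #A = G.indepNumOn t ∧ Disjoint K A :=
    fun K hK => hcon K (mem_powerset.1 (mem_filter.1 hK).1) (mem_filter.1 hK).2
  choose! A hAt hA hAcard hdisj using hex
  -- Replicate `v` once for each clique whose chosen independent set contains `v`.
  set k : V → ℕ := fun v => #{K ∈ 𝒦 | v ∈ A K}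
  have hsum : ∀ U : Finset V, ∑ v ∈ U, k v = ∑ K ∈ 𝒦, #(U ∩ A K) := fun U => by
    simpa [bipartiteAbove, bipartiteBelow, filter_mem_eq_inter] using
      sum_card_bipartiteAbove_eq_sum_card_bipartiteBelow (s := U) (t := 𝒦)
        (r := fun v K => v ∈ A K)
  have hcard : #(blowupSet t k) = #𝒦 * G.indepNumOn t := by
    rw [card_blowupSet, hsum, sum_congr rfl fun K hK => by
      rw [inter_eq_right.2 (hAt K hK), hAcard K hK], sum_const, smul_eq_mul]
  have hclique : G.blowup.cliqueNumOn (blowupSet t k) ≤ #𝒦 - 1 :=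
    cliqueNumOn_blowupSet_le fun K' hK't hK'cl => by
      have hK' : K' ∈ 𝒦 := mem_filter.2 ⟨mem_powerset.2 hK't, hK'cl⟩
      calc ∑ v ∈ K', k v = ∑ K ∈ 𝒦.erase K', #(K' ∩ A K) := by
            rw [hsum, sum_erase _ (by rw [disjoint_iff_inter_eq_empty.1 (hdisj K' hK')]; rfl)]
        _ ≤ ∑ _K ∈ 𝒦.erase K', 1 := sum_le_sum fun K hK =>
            hK'cl.card_inter_le_one (hA K (mem_of_mem_erase hK))
        _ = #𝒦 - 1 := by rw [sum_const, smul_eq_mul, mul_one, card_erase_of_mem hK']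
  have hc : 0 < #𝒦 := card_pos.2 ⟨∅, by simp [𝒦]⟩
  have ha : 0 < G.indepNumOn t := one_le_indepNumOn ht
  refine lt_irrefl (#𝒦 * G.indepNumOn t) ?_
  calc #𝒦 * G.indepNumOn t = #(blowupSet t k) := hcard.symm
    _ ≤ G.blowup.cliqueNumOn (blowupSet t k) * G.blowup.indepNumOn (blowupSet t k) :=
      (hP _).card_le_mul_indepNumOn
    _ ≤ (#𝒦 - 1) * G.indepNumOn t :=
      Nat.mul_le_mul hclique (indepNumOn_blowup_le fun p hp => (mem_blowupSet.1 hp).1)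
    _ < #𝒦 * G.indepNumOn t := Nat.mul_lt_mul_of_pos_right (Nat.sub_lt hc one_pos) ha

theorem exists_cliqueCover (hP : G.blowup.IsPerfect) (t : Finset V) :
    ∃ F : Finset (Finset V), #F ≤ G.indepNumOn t ∧
      (∀ K ∈ F, G.IsClique (K : Set V) ∧ K.Nonempty) ∧
      ∀ v ∈ t, ∃ K ∈ F, v ∈ K := by
  classical
  induction t using Finset.strongInduction with
  | H t ih =>
  obtain rfl | ht := t.eq_empty_or_nonempty
  · exact ⟨∅, by simp⟩
  obtain ⟨K, hKt, hK, hmeet⟩ := exists_isClique_forall_not_disjoint hP ht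
  have hKne : K.Nonempty := by
    obtain ⟨A, hAt, hA, hAcard⟩ := G.exists_isIndepSet_card_eq_indepNumOn t
    exact nonempty_of_ne_empty fun h => hmeet A hAt hA hAcard (h ▸ disjoint_empty_left A)
  have hlt : G.indepNumOn (t \ K) < G.indepNumOn t := by
    obtain ⟨B, hBt, hB, hBcard⟩ := G.exists_isIndepSet_card_eq_indepNumOn (t \ K)
    rw [← hBcard]
    exact (hB.card_le_indepNumOn (hBt.trans sdiff_subset)).lt_of_ne fun h =>
      hmeet B (hBt.trans sdiff_subset) hB h (disjoint_of_subset_right hBt sdiff_disjoint.symm)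
  obtain ⟨F, hFcard, hF, hcover⟩ := ih (t \ K) (sdiff_ssubset hKt hKne)
  refine ⟨insert K F, (card_insert_le _ _).trans (by omega),
    (forall_mem_insert _ _ _).2 ⟨⟨hK, hKne⟩, hF⟩, fun v hv => ?_⟩
  by_cases hvK : v ∈ K
  · exact ⟨K, mem_insert_self _ _, hvK⟩
  · obtain ⟨K', hK', hvK'⟩ := hcover v (mem_sdiff.2 ⟨hv, hvK⟩)
    exact ⟨K', mem_insert_of_mem hK', hvK'⟩

theorem isPerfect_of_chromaticNumber_eq_cliqueNum
    (hperf : ∀ s : Set V, (G.induce s).chromaticNumber = (G.induce s).cliqueNum) :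
    G.IsPerfect := by
  classical
  intro t
  obtain ⟨C⟩ := chromaticNumber_le_iff_colorable.1 (hperf t).le
  obtain ⟨u, hu⟩ := (G.induce (t : Set V)).exists_isNClique_cliqueNum
  have hle : (G.induce (t : Set V)).cliqueNum ≤ G.cliqueNumOn t := by
    rw [← hu.card_eq, ← card_map (Function.Embedding.subtype _)]
    refine IsClique.card_le_cliqueNumOn (fun x hx => ?_) fun x hx y hy hxy => ?_
    · obtain ⟨x, -, rfl⟩ := mem_map.1 hx
      exact x.2
    · obtain ⟨x', hx', rfl⟩ := mem_map.1 hx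
      obtain ⟨y', hy', rfl⟩ := mem_map.1 hy
      exact hu.isClique hx' hy' fun h => hxy (h ▸ rfl)
  refine ⟨fun x => if h : x ∈ t then C ⟨x, h⟩ else 0, fun x hx => ?_,
    fun x hx y hy hxy => ?_⟩
  · simp only [dif_pos hx]
    exact (C ⟨x, hx⟩).2.trans_le hle
  · simp only [dif_pos hx, dif_pos hy]
    exact fun h => C.valid (G := G.induce (t : Set V)) (by simpa using hxy) (Fin.ext h)

end SimpleGraph

namespace Finset

variable {α : Type*} {r : α → α → Prop}

theorem exists_source_of_no_cyclic_triangle {K : Finset α} (hK : K.Nonempty)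
    (htotal : ∀ u ∈ K, ∀ v ∈ K, u ≠ v → r u v ∨ r v u)
    (hcycle : ¬ ∃ a b c, r a b ∧ r b c ∧ r c a) :
    ∃ w ∈ K, ∀ v ∈ K, v ≠ w → r w v := by
  classical
  induction hK using Finset.Nonempty.cons_induction with
  | singleton a =>
    exact ⟨a, mem_singleton_self a, fun v hv hne => absurd (mem_singleton.1 hv) hne⟩
  | cons a s ha hs ih =>
    obtain ⟨w, hws, hw⟩ :=
      ih fun u hu v hv => htotal u (mem_cons_of_mem hu) v (mem_cons_of_mem hv)
    have hwa : w ≠ a := fun h => ha (h ▸ hws)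
    rcases htotal w (mem_cons_of_mem hws) a (mem_cons_self a s) hwa with hwa' | haw
    · refine ⟨w, mem_cons_of_mem hws, fun v hv hne => ?_⟩
      rcases mem_cons.1 hv with rfl | hv
      exacts [hwa', hw v hv hne]
    · refine ⟨a, mem_cons_self a s, fun v hv hne => ?_⟩
      have hvs : v ∈ s := (mem_cons.1 hv).resolve_left hne
      by_cases hvw : v = w
      · exact hvw ▸ haw
      · exact (htotal a (mem_cons_self a s) v hv hne.symm).resolve_right fun hva =>
          hcycle ⟨a, w, v, haw, hw v hvs hvw, hva⟩

theorem exists_dominating_of_forall_source [DecidableEq α] (F : Finset (Finset α))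
    (hF : ∀ K ∈ F, ∃ w ∈ K, ∀ v ∈ K, v ≠ w → r w v) :
    ∃ S : Finset α, #S ≤ #F ∧ ∀ K ∈ F, ∀ v ∈ K, v ∈ S ∨ ∃ w ∈ S, r w v := by
  induction F using Finset.induction_on with
  | empty => exact ⟨∅, by simp⟩
  | insert K F hKF ih =>
    obtain ⟨S, hS, hdom⟩ := ih fun K' hK' => hF K' (mem_insert_of_mem hK')
    obtain ⟨w, -, hw⟩ := hF K (mem_insert_self K F)
    refine ⟨insert w S, ?_, fun K' hK' v hv => ?_⟩
    · rw [card_insert_of_notMem hKF]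
      exact (card_insert_le _ _).trans (by omega)
    rcases mem_insert.1 hK' with rfl | hK'
    · by_cases hvw : v = w
      · exact Or.inl (hvw ▸ mem_insert_self w S)
      · exact Or.inr ⟨w, mem_insert_self w S, hw v hv hvw⟩
    · rcases hdom K' hK' v hv with h | ⟨u, hu, huv⟩
      · exact Or.inl (mem_insert_of_mem h)
      · exact Or.inr ⟨u, mem_insert_of_mem hu, huv⟩

end Finset

theorem perfect_cliqueAcyclic_orientation_domination_general
    (V : Type) [Fintype V]
    (G : SimpleGraph V)
    (hperf : ∀ s : Set V, (G.induce s).chromaticNumber = ((G.induce s).cliqueNum : ℕ∞))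
    (arc : V → V → Prop)
    (horient₂ : ∀ u v, G.Adj u v → arc u v ∨ arc v u)
    (htri : ¬ ∃ a b c, arc a b ∧ arc b c ∧ arc c a)
    (α : ℕ)
    (halpha : IsGreatest {n : ℕ | ∃ s : Finset V, s.card = n ∧
        ∀ u ∈ s, ∀ v ∈ s, u ≠ v → ¬ G.Adj u v} α) :
    ∃ S : Finset V, S.card ≤ α ∧
      ∀ v : V, v ∈ S ∨ ∃ w ∈ S, arc w v := by
  classical
  obtain ⟨F, hFcard, hF, hcover⟩ :=
    SimpleGraph.exists_cliqueCover (G.isPerfect_of_chromaticNumber_eq_cliqueNum hperf).blowup univ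
  obtain ⟨S, hScard, hdom⟩ := exists_dominating_of_forall_source F fun K hK =>
    exists_source_of_no_cyclic_triangle (hF K hK).2
      (fun u hu v hv huv => horient₂ u v ((hF K hK).1 hu hv huv)) htri
  refine ⟨S, hScard.trans (hFcard.trans ?_), fun v => ?_⟩
  · obtain ⟨A, -, hA, hAcard⟩ := G.exists_isIndepSet_card_eq_indepNumOn univ
    exact hAcard ▸ halpha.2 ⟨A, rfl, hA⟩
  · obtain ⟨K, hK, hvK⟩ := hcover v (mem_univ v)
    exact hdom K hK v hvK

/-- If `G` is a finite perfect graph (for every induced subgraph,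
chromatic number = clique number) and `D` (given by `arc`) is a clique-acyclic
orientation of `G`, then `γ(D) ≤ α(G)`. -/
theorem perfect_cliqueAcyclic_orientation_domination
    (V : Type) [Fintype V]
    (G : SimpleGraph V)
    (hperf : ∀ s : Set V, (G.induce s).chromaticNumber = ((G.induce s).cliqueNum : ℕ∞))
    (arc : V → V → Prop)
    (horient₁ : ∀ u v, arc u v → G.Adj u v)
    (horient₂ : ∀ u v, G.Adj u v → arc u v ∨ arc v u)
    (hasym : ∀ u v, arc u v → ¬ arc v u)
    (htri : ¬ ∃ a b c, arc a b ∧ arc b c ∧ arc c a)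
    (α : ℕ)
    (halpha : IsGreatest {n : ℕ | ∃ s : Finset V, s.card = n ∧
        ∀ u ∈ s, ∀ v ∈ s, u ≠ v → ¬ G.Adj u v} α) :
    ∃ S : Finset V, S.card ≤ α ∧
      ∀ v : V, v ∈ S ∨ ∃ w ∈ S, arc w v :=
  perfect_cliqueAcyclic_orientation_domination_general V G hperf arc horient₂ htri α halpha
end

section
/- Let D be a finite clique-acyclic digraph and let G be the underlying undirected graph of D. Then the domination number of D is at most the chromatic number of the complement of G: γ(D) ≤ χ(Ḡ). -/
/-- In a finite "tournament-like" set (totality on `s`), asymmetric, no cyclic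
triangle anywhere: there is a vertex beating all others in `s`. -/
lemma exists_top_of_clique {V : Type} (arc : V → V → Prop)
    (hasym : ∀ u v, arc u v → ¬ arc v u)
    (htri : ¬ ∃ a b c, arc a b ∧ arc b c ∧ arc c a)
    (s : Finset V)
    (htot : ∀ u ∈ s, ∀ v ∈ s, u ≠ v → arc u v ∨ arc v u) :
    s.Nonempty → ∃ w ∈ s, ∀ v ∈ s, v ≠ w → arc w v := by
  classical
  induction s using Finset.induction_on with
  | empty => intro h; exact absurd h (by simp)
  | @insert a s ha ih =>
    intro _
    by_cases hs : s.Nonempty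
    · obtain ⟨w, hw, hwd⟩ := ih (fun u hu v hv huv =>
        htot u (Finset.mem_insert_of_mem hu) v (Finset.mem_insert_of_mem hv) huv) hs
      have haw : a ≠ w := fun h => ha (h ▸ hw)
      rcases htot a (Finset.mem_insert_self a s) w (Finset.mem_insert_of_mem hw) haw with h1 | h1
      · -- a beats w; claim a is top
        refine ⟨a, Finset.mem_insert_self a s, ?_⟩
        intro v hv hva
        rcases Finset.mem_insert.mp hv with rfl | hv
        · exact absurd rfl hva
        · by_cases hvw : v = w
          · exact hvw ▸ h1
          · have hwv := hwd v hv hvw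
            rcases htot a (Finset.mem_insert_self a s) v (Finset.mem_insert_of_mem hv)
              (Ne.symm hva) with h2 | h2
            · exact h2
            · exact absurd ⟨a, w, v, h1, hwv, h2⟩ htri
      · -- w beats a; w stays top
        refine ⟨w, Finset.mem_insert_of_mem hw, ?_⟩
        intro v hv hvw
        rcases Finset.mem_insert.mp hv with rfl | hv
        · exact h1
        · exact hwd v hv hvw
    · rw [Finset.not_nonempty_iff_eq_empty] at hs
      subst hs
      exact ⟨a, Finset.mem_insert_self a ∅, by simp⟩

/-- Observation on `χ`. For a finite clique-acyclic digraph `D`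
with underlying undirected graph `G`, the domination number satisfies
`γ(D) ≤ χ(Gᶜ)`: there is a dominating set whose size is at most the chromatic
number of the complement of `G`. -/
theorem cliqueAcyclic_domination_le_chromatic_compl
    (V : Type) [Fintype V]
    (arc : V → V → Prop)
    (hirr : ∀ v, ¬ arc v v)
    (hasym : ∀ u v, arc u v → ¬ arc v u)
    (htri : ¬ ∃ a b c, arc a b ∧ arc b c ∧ arc c a)
    (G : SimpleGraph V)
    (hG : ∀ u v, G.Adj u v ↔ arc u v ∨ arc v u) :
    ∃ S : Finset V, (S.card : ℕ∞) ≤ Gᶜ.chromaticNumber ∧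
      ∀ v : V, v ∈ S ∨ ∃ w ∈ S, arc w v := by
  classical
  set n := ENat.toNat Gᶜ.chromaticNumber with hn
  have hcol : Gᶜ.Colorable n := Gᶜ.colorable_chromaticNumber_of_fintype
  have hne : Gᶜ.chromaticNumber ≠ ⊤ :=
    SimpleGraph.chromaticNumber_ne_top_iff_exists.mpr ⟨n, hcol⟩
  have hcast : (n : ℕ∞) = Gᶜ.chromaticNumber := ENat.coe_toNat hne
  obtain ⟨C⟩ := hcol
  -- each color class is a clique of G
  have hclass : ∀ i : Fin n, ∀ u ∈ Finset.univ.filter (fun v => C v = i),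
      ∀ v ∈ Finset.univ.filter (fun v => C v = i), u ≠ v → arc u v ∨ arc v u := by
    intro i u hu v hv huv
    simp only [Finset.mem_filter] at hu hv
    have hnadj : ¬ Gᶜ.Adj u v := fun h => C.valid h (hu.2.trans hv.2.symm)
    rw [SimpleGraph.compl_adj] at hnadj
    push_neg at hnadj
    exact (hG u v).mp (hnadj huv)
  -- choose a top vertex in each nonempty class
  have hex : ∀ i : Fin n, (Finset.univ.filter (fun v => C v = i)).Nonempty →
      ∃ w ∈ Finset.univ.filter (fun v => C v = i),
        ∀ v ∈ Finset.univ.filter (fun v => C v = i), v ≠ w → arc w v :=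
    fun i => exists_top_of_clique arc hasym htri _ (hclass i)
  by_cases hV : IsEmpty V
  · exact ⟨∅, by simp, fun v => (hV.false v).elim⟩
  rw [not_isEmpty_iff] at hV
  set g : Fin n → V := fun i =>
    if h : (Finset.univ.filter (fun v => C v = i)).Nonempty then (hex i h).choose
    else Classical.arbitrary V with hg
  refine ⟨Finset.univ.image g, ?_, ?_⟩
  · calc ((Finset.univ.image g).card : ℕ∞) ≤ ((Finset.univ : Finset (Fin n)).card : ℕ∞) := by
          exact_mod_cast Finset.card_image_le
      _ = (n : ℕ∞) := by simp
      _ = Gᶜ.chromaticNumber := hcast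
  · intro v
    set i := C v with hi
    have hne' : (Finset.univ.filter (fun u => C u = i)).Nonempty :=
      ⟨v, by simp [hi]⟩
    obtain ⟨hw, hwd⟩ := (hex i hne').choose_spec
    have hgv : g i = (hex i hne').choose := by rw [hg]; simp [hne']
    by_cases hveq : v = (hex i hne').choose
    · left
      exact Finset.mem_image.mpr ⟨i, Finset.mem_univ i, by rw [hgv, ← hveq]⟩
    · right
      exact ⟨g i, Finset.mem_image.mpr ⟨i, Finset.mem_univ i, rfl⟩,
        hgv ▸ hwd v (by simp [hi]) hveq⟩
end

section
/- Every finite simple graph G admits a clique-acyclic orientation D (in fact an acyclic orientation in which every vertex of a fixed maximum independent set has indegree zero) such that γ(D) = α(G), where γ(D) is the domination number of D and α(G) is the independence number of G. -/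
/-- Every finite simple graph `G` has a clique-acyclic orientation
`arc` whose domination number equals the independence number of `G`. -/
theorem exists_cliqueAcyclic_orientation_gamma_eq_alpha
    (V : Type) [Fintype V]
    (G : SimpleGraph V)
    (α : ℕ)
    (halpha : IsGreatest {n : ℕ | ∃ s : Finset V, s.card = n ∧
        ∀ u ∈ s, ∀ v ∈ s, u ≠ v → ¬ G.Adj u v} α) :
    ∃ arc : V → V → Prop,
      (∀ u v, arc u v → G.Adj u v) ∧
      (∀ u v, G.Adj u v → arc u v ∨ arc v u) ∧
      (∀ u v, arc u v → ¬ arc v u) ∧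
      (¬ ∃ a b c, arc a b ∧ arc b c ∧ arc c a) ∧
      IsLeast {n : ℕ | ∃ S : Finset V, S.card = n ∧
          ∀ v : V, v ∈ S ∨ ∃ w ∈ S, arc w v} α := by
  classical
  obtain ⟨A, hcard, hind⟩ := halpha.1
  -- every vertex outside A has a neighbor in A (A is a maximum independent set)
  have hmax : ∀ v, v ∉ A → ∃ w ∈ A, G.Adj w v := by
    intro v hv
    by_contra h
    push_neg at h
    have hindep : ∀ u ∈ insert v A, ∀ w ∈ insert v A, u ≠ w → ¬ G.Adj u w := by
      intro u hu w hw hne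
      rcases Finset.mem_insert.mp hu with hu | hu <;>
        rcases Finset.mem_insert.mp hw with hw | hw
      · exact absurd (hu.trans hw.symm) hne
      · intro hadj; rw [hu] at hadj; exact h w hw hadj.symm
      · intro hadj; rw [hw] at hadj; exact h u hu hadj
      · exact hind u hu w hw hne
    have hmem : α + 1 ∈ {n : ℕ | ∃ s : Finset V, s.card = n ∧
        ∀ u ∈ s, ∀ v ∈ s, u ≠ v → ¬ G.Adj u v} :=
      ⟨insert v A, by rw [Finset.card_insert_of_notMem hv, hcard], hindep⟩
    exact absurd (halpha.2 hmem) (by omega)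
  let e := Fintype.equivFin V
  refine ⟨fun u v => G.Adj u v ∧ (u ∈ A ∨ (v ∉ A ∧ e u < e v)), ?_, ?_, ?_, ?_, ?_⟩
  · exact fun u v h => h.1
  · intro u v h
    by_cases hu : u ∈ A
    · exact Or.inl ⟨h, Or.inl hu⟩
    by_cases hv : v ∈ A
    · exact Or.inr ⟨h.symm, Or.inl hv⟩
    rcases lt_trichotomy (e u) (e v) with hlt | heq | hgt
    · exact Or.inl ⟨h, Or.inr ⟨hv, hlt⟩⟩
    · exact absurd (e.injective heq) h.ne
    · exact Or.inr ⟨h.symm, Or.inr ⟨hu, hgt⟩⟩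
  · rintro u v ⟨hadj, h1⟩ ⟨hadj', h2⟩
    rcases h1 with hu | ⟨hv, hlt⟩
    · rcases h2 with hv | ⟨hu', _⟩
      · exact hind u hu v hv hadj.ne hadj
      · exact hu' hu
    · rcases h2 with hv' | ⟨hu, hlt'⟩
      · exact hv hv'
      · exact absurd hlt' (not_lt.mpr hlt.le)
  · rintro ⟨a, b, c, ⟨hab, h1⟩, ⟨hbc, h2⟩, ⟨hca, h3⟩⟩
    by_cases ha : a ∈ A
    · rcases h3 with hc | ⟨ha', _⟩
      · rcases h2 with hb | ⟨hc', _⟩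
        · exact hind a ha b hb hab.ne hab
        · exact hc' hc
      · exact ha' ha
    · obtain ⟨hb, hlt1⟩ := h1.resolve_left ha
      obtain ⟨hc, hlt2⟩ := h2.resolve_left hb
      obtain ⟨_, hlt3⟩ := h3.resolve_left hc
      exact absurd (hlt1.trans (hlt2.trans hlt3)) (lt_irrefl _)
  constructor
  · refine ⟨A, hcard, fun v => ?_⟩
    by_cases hv : v ∈ A
    · exact Or.inl hv
    · obtain ⟨w, hw, hadj⟩ := hmax v hv
      exact Or.inr ⟨w, hw, hadj, Or.inl hw⟩
  · rintro n ⟨S, hS, hdom⟩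
    have hAS : A ⊆ S := by
      intro a ha
      rcases hdom a with h | ⟨w, hw, hadj, h⟩
      · exact h
      · rcases h with hwA | ⟨ha', _⟩
        · exact absurd hadj (hind w hwA a ha hadj.ne)
        · exact absurd ha ha'
    calc α = A.card := hcard.symm
      _ ≤ S.card := Finset.card_le_card hAS
      _ = n := hS
end

section
/- Every finite digraph D contains a semi-kernel: an independent set U (no arc in either direction between any two distinct vertices of U) such that every vertex v of D can be reached from some vertex u ∈ U by a directed path with at most two edges, i.e., every vertex is in U, or is an outneighbor of a vertex of U, or is an outneighbor of an outneighbor of a vertex of U. -/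
open Classical in
private lemma semiKernel_aux (V : Type) [Fintype V] [DecidableEq V]
    (arc : V → V → Prop) :
    ∀ S : Finset V, ∃ U : Finset V, U ⊆ S ∧
      (∀ u ∈ U, ∀ v ∈ U, u ≠ v → ¬ arc u v) ∧
      ∀ v ∈ S, v ∈ U ∨ (∃ u ∈ U, arc u v) ∨ (∃ u ∈ U, ∃ w, arc u w ∧ arc w v) := by
  intro S
  induction S using Finset.strongInduction with
  | _ S ih =>
    rcases S.eq_empty_or_nonempty with rfl | ⟨v, hv⟩
    · exact ⟨∅, by simp⟩
    · set S' : Finset V := (S.erase v).filter (fun w => ¬ arc v w) with hS'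
      have hsub : S' ⊂ S := by
        refine Finset.ssubset_iff_of_subset ?_ |>.2 ⟨v, hv, ?_⟩
        · intro x hx
          exact Finset.mem_of_mem_erase (Finset.mem_filter.1 hx).1
        · simp [hS']
      obtain ⟨U', hU'sub, hind, hdom⟩ := ih S' hsub
      have hS'mem : ∀ x, x ∈ S' ↔ x ∈ S ∧ x ≠ v ∧ ¬ arc v x := by
        intro x; simp [hS', Finset.mem_erase, and_comm, and_left_comm]
        tauto
      by_cases hcase : ∃ u ∈ U', arc u v
      · obtain ⟨u, hu, huv⟩ := hcase
        refine ⟨U', fun x hx => (hS'mem x).1 (hU'sub hx) |>.1, hind, ?_⟩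
        intro x hxS
        by_cases hx1 : x = v
        · subst hx1; exact Or.inr (Or.inl ⟨u, hu, huv⟩)
        by_cases hx2 : arc v x
        · exact Or.inr (Or.inr ⟨u, hu, v, huv, hx2⟩)
        · exact hdom x ((hS'mem x).2 ⟨hxS, hx1, hx2⟩)
      · push_neg at hcase
        have hvnot : v ∉ U' := fun h => ((hS'mem v).1 (hU'sub h)).2.1 rfl
        refine ⟨insert v U', ?_, ?_, ?_⟩
        · intro x hx
          rcases Finset.mem_insert.1 hx with rfl | hx
          · exact hv
          · exact ((hS'mem x).1 (hU'sub hx)).1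
        · intro a ha b hb hab
          rcases Finset.mem_insert.1 ha with ha' | ha'
          · rcases Finset.mem_insert.1 hb with hb' | hb'
            · exact absurd (ha'.trans hb'.symm) hab
            · subst ha'; exact ((hS'mem b).1 (hU'sub hb')).2.2
          · rcases Finset.mem_insert.1 hb with hb' | hb'
            · subst hb'; exact hcase a ha'
            · exact hind a ha' b hb' hab
        · intro x hxS
          by_cases hx1 : x = v
          · exact Or.inl (Finset.mem_insert.2 (Or.inl hx1))
          by_cases hx2 : arc v x
          · exact Or.inr (Or.inl ⟨v, Finset.mem_insert_self _ _, hx2⟩)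
          · rcases hdom x ((hS'mem x).2 ⟨hxS, hx1, hx2⟩) with h | ⟨u, hu, h⟩ | ⟨u, hu, w, h1, h2⟩
            · exact Or.inl (Finset.mem_insert.2 (Or.inr h))
            · exact Or.inr (Or.inl ⟨u, Finset.mem_insert_of_mem hu, h⟩)
            · exact Or.inr (Or.inr ⟨u, Finset.mem_insert_of_mem hu, w, h1, h2⟩)

/-- Chvátal–Lovász. Every finite digraph contains a semi-kernel:
an independent set `U` such that every vertex is in `U`, an outneighbor of `U`, or
an outneighbor of an outneighbor of `U`. -/
theorem exists_semiKernel
    (V : Type) [Fintype V]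
    (arc : V → V → Prop)
    (hirr : ∀ v, ¬ arc v v) :
    ∃ U : Finset V,
      (∀ u ∈ U, ∀ v ∈ U, u ≠ v → ¬ arc u v) ∧
      ∀ v : V, v ∈ U ∨ (∃ u ∈ U, arc u v) ∨ (∃ u ∈ U, ∃ w, arc u w ∧ arc w v) := by
  classical
  obtain ⟨U, _, hind, hdom⟩ := semiKernel_aux V arc Finset.univ
  exact ⟨U, hind, fun v => hdom v (Finset.mem_univ v)⟩
end

section
/- For every positive integer k there exists an orientation D of a finite complete bipartite graph with parts A and B such that γ₀(D) > k, i.e., no k vertices of A have outneighborhoods covering B, and no k vertices of B have outneighborhoods covering A. -/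
/-- For every positive integer `k` there is an orientation of some
finite complete bipartite graph (parts `A`, `B`; `o a b = true` means the arc goes
from `a` to `b`, `o a b = false` means it goes from `b` to `a`) such that
`γ₀ > k`: no `k` vertices of `A` dominate `B` and no `k` vertices of `B`
dominate `A`. -/
theorem exists_bipartite_orientation_gamma0_gt (k : ℕ) (hk : 0 < k) :
    ∃ (A B : Type) (_ : Fintype A) (_ : Fintype B) (o : A → B → Bool),
      (¬ ∃ S : Finset A, S.card ≤ k ∧ ∀ b : B, ∃ a ∈ S, o a b = true) ∧
      (¬ ∃ T : Finset B, T.card ≤ k ∧ ∀ a : A, ∃ b ∈ T, o a b = false) := by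
  refine ⟨Fin (k * k + 1), {S : Finset (Fin (k * k + 1)) // S.card ≤ k},
    inferInstance, inferInstance, fun a S => decide (a ∉ S.val), ?_, ?_⟩
  · rintro ⟨S, hS, hcov⟩
    obtain ⟨a, ha, hab⟩ := hcov ⟨S, hS⟩
    simp at hab
    exact hab ha
  · rintro ⟨T, hT, hcov⟩
    set U : Finset (Fin (k * k + 1)) := T.biUnion (fun b => b.val) with hU
    have hUcard : U.card ≤ k * k := by
      calc U.card ≤ ∑ b ∈ T, b.val.card := Finset.card_biUnion_le
        _ ≤ ∑ _b ∈ T, k := Finset.sum_le_sum (fun b _ => b.2)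
        _ = T.card * k := by rw [Finset.sum_const, smul_eq_mul]
        _ ≤ k * k := Nat.mul_le_mul_right k hT
    have : ∃ a : Fin (k * k + 1), a ∉ U := by
      by_contra h
      push_neg at h
      have : Finset.univ ⊆ U := fun a _ => h a
      have := Finset.card_le_card this
      simp [Finset.card_univ] at this
      omega
    obtain ⟨a, haU⟩ := this
    obtain ⟨b, hb, hab⟩ := hcov a
    simp at hab
    exact haU (Finset.mem_biUnion.2 ⟨b, hb, hab⟩)
end
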